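/- arXiv:2410.01069 — 4 statements merged into one kernel-verified Lean document; each statement's English description precedes it below -/
import Mathlib

section
/- For every s ∈ ℂ with Re(s) > 1, the Dirichlet eta series equals the eta integral: ∑_{n=1}^{∞} (−1)^{n−1}/n^{s} = (1/Γ(s)) ∫_{0}^{∞} t^{s−1}/(e^{t}+1) dt, where for t > 0 the complex power t^{s−1} means exp((s−1)·log t). -/
/-!
For `t > 0` the geometric series gives `1 / (eᵗ + 1) = ∑_{n ≥ 1} (-1)ⁿ⁻¹ e⁻ⁿᵗ`, and the Mellin
transform of `e⁻ⁿᵗ` at `s` is `Γ(s) / nˢ`. For `Re s > 1` the resulting Dirichlet series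
converges absolutely, which justifies exchanging sum and integral (`hasSum_mellin`).
-/

open MeasureTheory Set

theorem Real.hasSum_alternating_exp_neg_mul_succ {t : ℝ} (ht : 0 < t) :
    HasSum (fun n : ℕ ↦ (-1) ^ n * Real.exp (-(n + 1) * t)) (Real.exp t + 1)⁻¹ := by
  have hr : |-Real.exp (-t)| < 1 := by
    rw [abs_neg, abs_of_pos (Real.exp_pos _), Real.exp_lt_one_iff]
    linarith
  have hsum : Real.exp (-t) * (1 - -Real.exp (-t))⁻¹ = (Real.exp t + 1)⁻¹ := by
    rw [Real.exp_neg, sub_neg_eq_add, ← mul_inv, mul_add, mul_one,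
      mul_inv_cancel₀ (Real.exp_ne_zero t), add_comm]
  refine hsum ▸ ((hasSum_geometric_of_abs_lt_one hr).mul_left _).congr_fun fun n ↦ ?_
  rw [neg_pow (Real.exp (-t)), ← Real.exp_nat_mul, mul_left_comm, ← Real.exp_add]
  ring_nf

theorem Complex.hasSum_pnat_alternating_exp_neg_mul {t : ℝ} (ht : 0 < t) :
    HasSum (fun n : ℕ+ ↦ (-1 : ℂ) ^ ((n : ℕ) - 1) * Real.exp (-(n : ℝ) * t))
      (1 / ((Real.exp t + 1 : ℝ) : ℂ)) := by
  rw [hasSum_pnat_iff_hasSum_succ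
    (f := fun n : ℕ ↦ (-1 : ℂ) ^ (n - 1) * Real.exp (-(n : ℝ) * t)), one_div]
  exact_mod_cast Complex.hasSum_ofReal.mpr (Real.hasSum_alternating_exp_neg_mul_succ ht)

theorem summable_pnat_norm_alternating_div_rpow {σ : ℝ} (hσ : 1 < σ) :
    Summable fun n : ℕ+ ↦ ‖(-1 : ℂ) ^ ((n : ℕ) - 1)‖ / (n : ℝ) ^ σ := by
  simpa [Function.comp_def] using
    (Real.summable_one_div_nat_rpow.mpr hσ).comp_injective PNat.coe_injective

/-- Integral representation of the Dirichlet eta function for `Re s > 1`: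
`∑_{n=1}^∞ (-1)^{n-1}/n^s = (1/Γ(s)) ∫_0^∞ t^{s-1}/(exp t + 1) dt`. -/
theorem dirichlet_eta_series_eq_integral
    (s : ℂ) (hs : 1 < s.re) :
    ∑' n : ℕ+, (-1 : ℂ) ^ ((n : ℕ) - 1) / ((n : ℕ) : ℂ) ^ s =
      (1 / Complex.Gamma s) *
        ∫ t in Set.Ioi (0 : ℝ), ((t : ℝ) : ℂ) ^ (s - 1) / ((Real.exp t + 1 : ℝ) : ℂ) := by
  have hmellin := hasSum_mellin (fun n : ℕ+ ↦ Or.inr (Nat.cast_pos.mpr n.pos)) (by linarith)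
    (fun _ ht ↦ Complex.hasSum_pnat_alternating_exp_neg_mul ht)
    (summable_pnat_norm_alternating_div_rpow hs)
  have hΓ : Complex.Gamma s ≠ 0 := Complex.Gamma_ne_zero_of_re_pos (by linarith)
  simp only [mellin, smul_eq_mul, mul_one_div] at hmellin
  rw [← hmellin.tsum_eq, ← tsum_mul_left]
  congr 1 with n
  rw [Complex.ofReal_natCast]
  field_simp
end

section
/- Let f : ℝ → ℝ be measurable and nonnegative, let α, β ∈ ℂ with Re(α) > 0 and Re(β) > 0, and let x ∈ ℝ. Assume that t ↦ (x−t)^{Re(α)+Re(β)−1} f(t) is integrable on (−∞, x] and that for every y ≤ x the function t ↦ (y−t)^{Re(β)−1} f(t) is integrable on (−∞, y]. Then the semigroup property holds: (1/Γ(α)) ∫_{−∞}^{x} (x−t)^{α−1} · [(1/Γ(β)) ∫_{−∞}^{t} (t−u)^{β−1} f(u) du] dt = (1/Γ(α+β)) ∫_{−∞}^{x} (x−t)^{α+β−1} f(t) dt, where for v > 0 the complex power v^{w} means exp(w·log v). -/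
/-!
By Fubini, the iterated integral equals `∫_{u ≤ x} f u (∫_u^x (x-t)^(α-1) (t-u)^(β-1) dt) du`,
and the substitution `t = u + (x-u) s` turns the inner integral into `(x-u)^(α+β-1) B(β, α)`.
Fubini applies because taking absolute values replaces `α, β` by their real parts, so the same
computation bounds the double integral of the absolute value by
`|B(Re β, Re α)| ∫_{u ≤ x} (x-u)^(Re α + Re β - 1) |f u| du`.
The constants match by `Γ(α) Γ(β) = Γ(α+β) B(β, α)`.
-/

open MeasureTheory Set

theorem intervalIntegrable_cpow_mul_sub_cpow {s t : ℂ} (hs : 0 < s.re) (ht : 0 < t.re)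
    {a : ℝ} (ha : 0 < a) :
    IntervalIntegrable (fun y : ℝ => (y : ℂ) ^ (s - 1) * ((a : ℂ) - y) ^ (t - 1)) volume 0 a := by
  have hbeta := ((Complex.betaIntegral_convergent hs ht).comp_mul_left (c := a⁻¹)).const_mul
    ((a : ℂ) ^ (s - 1) * (a : ℂ) ^ (t - 1))
  rw [zero_div, one_div, inv_inv] at hbeta
  refine hbeta.congr_ae (ae_restrict_of_forall_mem measurableSet_uIoc fun y hy => ?_)
  rw [uIoc_of_le ha.le] at hy
  have hy0 : 0 ≤ a⁻¹ * y := mul_nonneg (inv_nonneg.2 ha.le) hy.1.le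
  have hy1 : 0 ≤ 1 - a⁻¹ * y := by
    rw [sub_nonneg, inv_mul_le_iff₀ ha, mul_one]; exact hy.2
  have ha' : (a : ℂ) ≠ 0 := by exact_mod_cast ha.ne'
  have hsplit_y : (y : ℂ) = (a : ℂ) * ((a⁻¹ * y : ℝ) : ℂ) := by
    push_cast; field_simp
  have hsplit_ay : (a : ℂ) - y = (a : ℂ) * ((1 - a⁻¹ * y : ℝ) : ℂ) := by
    push_cast; field_simp
  dsimp only
  rw [hsplit_ay, hsplit_y, Complex.mul_cpow_ofReal_nonneg ha.le hy0,
    Complex.mul_cpow_ofReal_nonneg ha.le hy1]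
  push_cast
  ring

noncomputable def betaKernel (α β : ℂ) (u x t : ℝ) : ℂ :=
  ((x - t : ℝ) : ℂ) ^ (α - 1) * ((t - u : ℝ) : ℂ) ^ (β - 1)

section BetaKernel

variable {α β : ℂ} {u x : ℝ}

theorem betaKernel_eq_comp_sub_right (α β : ℂ) (u x t : ℝ) :
    betaKernel α β u x t
      = ((t - u : ℝ) : ℂ) ^ (β - 1) * (((x - u : ℝ) : ℂ) - (t - u : ℝ)) ^ (α - 1) := by
  rw [betaKernel, mul_comm]
  push_cast
  ring_nf

theorem integrableOn_betaKernel (hα : 0 < α.re) (hβ : 0 < β.re) (hux : u < x) :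
    IntegrableOn (betaKernel α β u x) (Ioc u x) := by
  have h := (intervalIntegrable_cpow_mul_sub_cpow hβ hα (sub_pos.2 hux)).comp_sub_right u
  rw [zero_add, sub_add_cancel] at h
  rw [funext (betaKernel_eq_comp_sub_right α β u x)]
  exact (intervalIntegrable_iff_integrableOn_Ioc_of_le hux.le).1 h

theorem integral_betaKernel (α β : ℂ) (hux : u < x) :
    ∫ t in Ioc u x, betaKernel α β u x t
      = ((x - u : ℝ) : ℂ) ^ (α + β - 1) * Complex.betaIntegral β α := by
  rw [← intervalIntegral.integral_of_le hux.le]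
  simp only [betaKernel_eq_comp_sub_right]
  rw [intervalIntegral.integral_comp_sub_right
      (fun s : ℝ => (s : ℂ) ^ (β - 1) * (((x - u : ℝ) : ℂ) - s) ^ (α - 1)),
    sub_self, Complex.betaIntegral_scaled β α (sub_pos.2 hux), add_comm β]

theorem ofReal_norm_betaKernel {t : ℝ} (ht : t ∈ Ioo u x) :
    (‖betaKernel α β u x t‖ : ℂ) = betaKernel α.re β.re u x t := by
  rw [betaKernel, betaKernel, norm_mul, Complex.norm_cpow_eq_rpow_re_of_pos (sub_pos.2 ht.2),
    Complex.norm_cpow_eq_rpow_re_of_pos (sub_pos.2 ht.1), Complex.ofReal_mul,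
    Complex.ofReal_cpow (sub_pos.2 ht.2).le, Complex.ofReal_cpow (sub_pos.2 ht.1).le]
  simp

theorem integral_norm_betaKernel (hux : u < x) :
    ∫ t in Ioc u x, ‖betaKernel α β u x t‖
      = (x - u) ^ (α.re + β.re - 1) * ‖Complex.betaIntegral β.re α.re‖ := by
  have h : ((∫ t in Ioc u x, ‖betaKernel α β u x t‖ : ℝ) : ℂ)
      = ((x - u : ℝ) : ℂ) ^ ((α.re : ℂ) + β.re - 1) * Complex.betaIntegral β.re α.re :=
    calc ((∫ t in Ioc u x, ‖betaKernel α β u x t‖ : ℝ) : ℂ)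
        = ∫ t in Ioo u x, (‖betaKernel α β u x t‖ : ℂ) := by
          rw [← integral_complex_ofReal, setIntegral_congr_set Ioo_ae_eq_Ioc]
      _ = ∫ t in Ioc u x, betaKernel α.re β.re u x t := by
          rw [setIntegral_congr_fun measurableSet_Ioo fun t ht => ofReal_norm_betaKernel ht,
            setIntegral_congr_set Ioo_ae_eq_Ioc]
      _ = _ := integral_betaKernel _ _ hux
  have hnorm := congrArg norm h
  rwa [Complex.norm_real, Real.norm_of_nonneg (setIntegral_nonneg measurableSet_Ioc
      fun t _ => norm_nonneg _), norm_mul, Complex.norm_cpow_eq_rpow_re_of_pos (sub_pos.2 hux)]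
    at hnorm

end BetaKernel

noncomputable def rlIterateIntegrand (α β : ℂ) (f : ℝ → ℂ) (x : ℝ) : ℝ × ℝ → ℂ :=
  {p | p.2 ≤ p.1}.indicator fun p => betaKernel α β p.2 x p.1 * f p.2

section Iterate

variable {α β : ℂ} {f : ℝ → ℂ} {x : ℝ}

theorem rlIterateIntegrand_eq_indicator_Iic (t u : ℝ) :
    rlIterateIntegrand α β f x (t, u)
      = (Iic t).indicator (fun u => betaKernel α β u x t * f u) u := by
  simp only [rlIterateIntegrand, indicator_apply, mem_ofPred_eq, mem_Iic]

theorem rlIterateIntegrand_eq_indicator_Ici (t u : ℝ) :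
    rlIterateIntegrand α β f x (t, u)
      = (Ici u).indicator (fun t => betaKernel α β u x t * f u) t := by
  simp only [rlIterateIntegrand, indicator_apply, mem_ofPred_eq, mem_Ici]

theorem setIntegral_rlIterateIntegrand_fst (u : ℝ) :
    ∫ t in Iic x, rlIterateIntegrand α β f x (t, u)
      = (∫ t in Ioc u x, betaKernel α β u x t) * f u := by
  simp only [rlIterateIntegrand_eq_indicator_Ici]
  rw [setIntegral_indicator measurableSet_Ici, Iic_inter_Ici, integral_Icc_eq_integral_Ioc,
    integral_mul_const]

theorem setIntegral_norm_rlIterateIntegrand_fst (u : ℝ) :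
    ∫ t in Iic x, ‖rlIterateIntegrand α β f x (t, u)‖
      = (∫ t in Ioc u x, ‖betaKernel α β u x t‖) * ‖f u‖ := by
  simp only [rlIterateIntegrand_eq_indicator_Ici, norm_indicator_eq_indicator_norm]
  rw [setIntegral_indicator measurableSet_Ici, Iic_inter_Ici, integral_Icc_eq_integral_Ioc,
    ← integral_mul_const]
  simp only [norm_mul]

theorem integrable_rlIterateIntegrand (hf : AEStronglyMeasurable f)
    (hα : 0 < α.re) (hβ : 0 < β.re)
    (hint : IntegrableOn (fun t => (x - t) ^ (α.re + β.re - 1) * ‖f t‖) (Iic x)) :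
    Integrable (rlIterateIntegrand α β f x) ((volume.restrict (Iic x)).prod volume) := by
  have hmeas : AEStronglyMeasurable (rlIterateIntegrand α β f x)
      ((volume.restrict (Iic x)).prod volume) := by
    refine AEStronglyMeasurable.indicator ?_ (measurableSet_le measurable_snd measurable_fst)
    refine .mul ?_ (hf.comp_quasiMeasurePreserving Measure.quasiMeasurePreserving_snd)
    unfold betaKernel
    fun_prop
  refine (integrable_prod_iff' hmeas).2 ⟨.of_forall fun u => ?_, ?_⟩
  · simp only [rlIterateIntegrand_eq_indicator_Ici]
    refine (integrableOn_indicator_iff measurableSet_Ici).2 ?_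
    rw [Ici_inter_Iic, integrableOn_Icc_iff_integrableOn_Ioc]
    rcases lt_or_ge u x with hux | hxu
    · exact (integrableOn_betaKernel hα hβ hux).mul_const (f u)
    · rw [Ioc_eq_empty hxu.not_gt]
      exact integrableOn_empty
  · have hvalue : (fun u => ∫ t in Iic x, ‖rlIterateIntegrand α β f x (t, u)‖) = (Iio x).indicator
        fun u => (x - u) ^ (α.re + β.re - 1) * ‖f u‖ * ‖Complex.betaIntegral β.re α.re‖ := by
      ext u
      rw [setIntegral_norm_rlIterateIntegrand_fst, indicator_apply]
      split_ifs with hux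
      · rw [integral_norm_betaKernel hux]
        ring
      · rw [Ioc_eq_empty (not_lt.1 hux).not_gt, Measure.restrict_empty, integral_zero_measure,
          zero_mul]
    rw [hvalue]
    exact IntegrableOn.integrable_indicator ((hint.mono_set Iio_subset_Iic_self).mul_const _)
      measurableSet_Iio

end Iterate

theorem setIntegral_cpow_mul_setIntegral_cpow_mul {α β : ℂ} {f : ℝ → ℂ} {x : ℝ}
    (hf : AEStronglyMeasurable f) (hα : 0 < α.re) (hβ : 0 < β.re)
    (hint : IntegrableOn (fun t => (x - t) ^ (α.re + β.re - 1) * ‖f t‖) (Iic x)) :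
    ∫ t in Iic x, ((x - t : ℝ) : ℂ) ^ (α - 1) * ∫ u in Iic t, ((t - u : ℝ) : ℂ) ^ (β - 1) * f u
      = Complex.betaIntegral β α * ∫ t in Iic x, ((x - t : ℝ) : ℂ) ^ (α + β - 1) * f t := by
  have hF := integrable_rlIterateIntegrand hf hα hβ hint
  calc _ = ∫ t in Iic x, ∫ u, rlIterateIntegrand α β f x (t, u) := by
        refine integral_congr_ae (.of_forall fun t => ?_)
        simp only [rlIterateIntegrand_eq_indicator_Iic, betaKernel, mul_assoc]
        rw [integral_indicator measurableSet_Iic, integral_const_mul]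
    _ = ∫ u, ∫ t in Iic x, rlIterateIntegrand α β f x (t, u) := by
        rw [← integral_prod _ hF, integral_prod_symm _ hF]
    _ = ∫ u, (Iio x).indicator
          (fun u => Complex.betaIntegral β α * (((x - u : ℝ) : ℂ) ^ (α + β - 1) * f u)) u := by
        refine integral_congr_ae (.of_forall fun u => ?_)
        dsimp only
        rw [setIntegral_rlIterateIntegrand_fst, indicator_apply]
        split_ifs with hux
        · rw [integral_betaKernel α β hux]
          ring
        · rw [Ioc_eq_empty (not_lt.1 hux).not_gt, Measure.restrict_empty, integral_zero_measure,
            zero_mul]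
    _ = _ := by
        rw [integral_indicator measurableSet_Iio, setIntegral_congr_set Iio_ae_eq_Iic,
          integral_const_mul]

/-- The paper's `₋∞I_x^s f`. -/
noncomputable def riemannLiouville (s : ℂ) (f : ℝ → ℂ) (x : ℝ) : ℂ :=
  1 / Complex.Gamma s * ∫ t in Iic x, ((x - t : ℝ) : ℂ) ^ (s - 1) * f t

theorem riemannLiouville_riemannLiouville {α β : ℂ} {f : ℝ → ℂ} {x : ℝ}
    (hf : AEStronglyMeasurable f) (hα : 0 < α.re) (hβ : 0 < β.re)
    (hint : IntegrableOn (fun t => (x - t) ^ (α.re + β.re - 1) * ‖f t‖) (Iic x)) :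
    riemannLiouville α (riemannLiouville β f) x = riemannLiouville (α + β) f x := by
  have hΓ : Complex.Gamma α * Complex.Gamma β
      = Complex.Gamma (α + β) * Complex.betaIntegral β α := by
    rw [mul_comm, add_comm, Complex.Gamma_mul_Gamma_eq_betaIntegral hβ hα]
  have hΓα := Complex.Gamma_ne_zero_of_re_pos hα
  have hΓβ := Complex.Gamma_ne_zero_of_re_pos hβ
  have hΓαβ := Complex.Gamma_ne_zero_of_re_pos (s := α + β) (by rw [Complex.add_re]; positivity)
  simp only [riemannLiouville, mul_left_comm _ (1 / Complex.Gamma β)]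
  rw [integral_const_mul, setIntegral_cpow_mul_setIntegral_cpow_mul hf hα hβ hint]
  field_simp
  linear_combination -(∫ t in Iic x, ((x - t : ℝ) : ℂ) ^ (α + β - 1) * f t) * hΓ

theorem riemannLiouville_improper_semigroup_general
    (f : ℝ → ℝ) (hf : Measurable f)
    (α β : ℂ) (hα : 0 < α.re) (hβ : 0 < β.re) (x : ℝ)
    (hint : IntegrableOn
      (fun t : ℝ => (x - t) ^ (α.re + β.re - 1) * f t) (Set.Iic x)) :
    (1 / Complex.Gamma α) *
        ∫ t in Set.Iic x, ((x - t : ℝ) : ℂ) ^ (α - 1) *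
          ((1 / Complex.Gamma β) *
            ∫ u in Set.Iic t, ((t - u : ℝ) : ℂ) ^ (β - 1) * (f u : ℂ)) =
      (1 / Complex.Gamma (α + β)) *
        ∫ t in Set.Iic x, ((x - t : ℝ) : ℂ) ^ (α + β - 1) * (f t : ℂ) := by
  have hint_norm : IntegrableOn (fun t => (x - t) ^ (α.re + β.re - 1) * ‖(f t : ℂ)‖) (Iic x) := by
    refine IntegrableOn.congr_fun hint.norm (fun t ht => ?_) measurableSet_Iic
    rw [norm_mul, Real.norm_of_nonneg (Real.rpow_nonneg (sub_nonneg.2 ht) _), Complex.norm_real]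
  exact riemannLiouville_riemannLiouville (Complex.measurable_ofReal.comp hf).aestronglyMeasurable
    hα hβ hint_norm

/-- Semigroup property of lower-bounded Riemann–Liouville fractional integrals with
lower bound `-∞`, for a nonnegative measurable function under integrability hypotheses. -/
theorem riemannLiouville_improper_semigroup
    (f : ℝ → ℝ) (hf : Measurable f) (hf0 : ∀ t : ℝ, 0 ≤ f t)
    (α β : ℂ) (hα : 0 < α.re) (hβ : 0 < β.re) (x : ℝ)
    (hint : IntegrableOn
      (fun t : ℝ => (x - t) ^ (α.re + β.re - 1) * f t) (Set.Iic x))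
    (hint' : ∀ y : ℝ, y ≤ x →
      IntegrableOn (fun t : ℝ => (y - t) ^ (β.re - 1) * f t) (Set.Iic y)) :
    (1 / Complex.Gamma α) *
        ∫ t in Set.Iic x, ((x - t : ℝ) : ℂ) ^ (α - 1) *
          ((1 / Complex.Gamma β) *
            ∫ u in Set.Iic t, ((t - u : ℝ) : ℂ) ^ (β - 1) * (f u : ℂ)) =
      (1 / Complex.Gamma (α + β)) *
        ∫ t in Set.Iic x, ((x - t : ℝ) : ℂ) ^ (α + β - 1) * (f t : ℂ) :=
  riemannLiouville_improper_semigroup_general f hf α β hα hβ x hint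
end

section
/- Let f(t) = 1/(e^{−t}+1), let s ∈ ℂ with Re(s) > 0, and let x < 0. Then the function x ↦ (1/Γ(s+1)) ∫_{−∞}^{x} (x−t)^{s}/(e^{−t}+1) dt is differentiable at x with derivative (1/Γ(s)) ∫_{−∞}^{x} (x−t)^{s−1}/(e^{−t}+1) dt; that is, (d/dx)(₋∞I_x^{s+1} f)(x) = (₋∞I_x^{s} f)(x). Here for u > 0 the complex power u^{w} means exp(w·log u). -/
open MeasureTheory Set Filter Topology Real

/-! Substituting `t = y - u` turns the integral of order `s + 1` into
`∫₀^∞ u^s f(y - u) du`, which can be differentiated under the integral sign because `f` and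
`f'` are `O(eᵗ)` as `t → -∞`. Integrating `∫₀^∞ u^s f'(x - u) du` by parts gives
`s ∫₀^∞ u^(s-1) f(x - u) du`: the boundary terms vanish at `0` because `Re s > 0` and at `∞` by
the exponential decay. Finally `Γ(s + 1) = s Γ(s)`. -/

theorem setIntegral_Iic_eq_setIntegral_Ioi_sub {E : Type*} [NormedAddCommGroup E]
    [NormedSpace ℝ E] (g : ℝ → E) (y : ℝ) :
    ∫ t in Iic y, g t = ∫ u in Ioi 0, g (y - u) := by
  have hpre : (fun u : ℝ => y - u) ⁻¹' Iic y = Ici 0 := by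
    ext u; simp
  have h := (Measure.measurePreserving_sub_left volume y).setIntegral_preimage_emb
    (Homeomorph.subLeft y).measurableEmbedding g (Iic y)
  rw [hpre, integral_Ici_eq_integral_Ioi] at h
  exact h.symm

section ExponentialGrowth

variable {g : ℝ → ℂ} {C : ℝ}

theorem norm_cpow_mul_comp_sub_le (hg : ∀ t, ‖g t‖ ≤ C * exp t) (w : ℂ) (y : ℝ) {u : ℝ}
    (hu : 0 < u) : ‖(u : ℂ) ^ w * g (y - u)‖ ≤ C * exp y * (u ^ w.re * exp (-u)) := by
  rw [norm_mul, Complex.norm_cpow_eq_rpow_re_of_pos hu]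
  calc u ^ w.re * ‖g (y - u)‖ ≤ u ^ w.re * (C * exp (y - u)) :=
        mul_le_mul_of_nonneg_left (hg _) (rpow_nonneg hu.le _)
    _ = C * exp y * (u ^ w.re * exp (-u)) := by
        rw [sub_eq_add_neg, exp_add]; ring

theorem integrableOn_cpow_mul_comp_sub (hg : Measurable g) (hgb : ∀ t, ‖g t‖ ≤ C * exp t)
    {w : ℂ} (hw : -1 < w.re) (y : ℝ) :
    IntegrableOn (fun u : ℝ => (u : ℂ) ^ w * g (y - u)) (Ioi 0) := by
  have hdom : IntegrableOn (fun u : ℝ => u ^ w.re * exp (-u)) (Ioi 0) := by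
    simpa using integrableOn_rpow_mul_exp_neg_rpow hw one_pos
  refine (hdom.const_mul (C * exp y)).mono' ?_ ?_
  · exact ((Complex.measurable_ofReal.pow_const w).mul
      (hg.comp (measurable_const.sub measurable_id))).aestronglyMeasurable
  · filter_upwards [self_mem_ae_restrict measurableSet_Ioi] with u hu
    exact norm_cpow_mul_comp_sub_le hgb w y hu

end ExponentialGrowth

section Differentiation

variable {f f' : ℝ → ℂ} {C : ℝ}

theorem hasDerivAt_integral_Ioi_cpow_mul_comp_sub (hf : ∀ t, HasDerivAt f (f' t) t)
    (hf' : Measurable f') (hfb : ∀ t, ‖f t‖ ≤ C * exp t) (hf'b : ∀ t, ‖f' t‖ ≤ C * exp t)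
    {s : ℂ} (hs : -1 < s.re) (x : ℝ) :
    HasDerivAt (fun y : ℝ => ∫ u in Ioi (0 : ℝ), (u : ℂ) ^ s * f (y - u))
      (∫ u in Ioi (0 : ℝ), (u : ℂ) ^ s * f' (x - u)) x := by
  have hC : 0 ≤ C := nonneg_of_mul_nonneg_left ((norm_nonneg _).trans (hfb 0)) (exp_pos 0)
  have hfm : Measurable f :=
    (continuous_iff_continuousAt.2 fun t => (hf t).continuousAt).measurable
  have hdom : IntegrableOn (fun u : ℝ => u ^ s.re * exp (-u)) (Ioi 0) := by
    simpa using integrableOn_rpow_mul_exp_neg_rpow hs one_pos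
  refine (hasDerivAt_integral_of_dominated_loc_of_deriv_le (Iio_mem_nhds (lt_add_one x))
    (Eventually.of_forall fun y => (integrableOn_cpow_mul_comp_sub hfm hfb hs y).1)
    (integrableOn_cpow_mul_comp_sub hfm hfb hs x)
    (F' := fun y u => (u : ℂ) ^ s * f' (y - u)) (integrableOn_cpow_mul_comp_sub hf' hf'b hs x).1
    (bound := fun u => C * exp (x + 1) * (u ^ s.re * exp (-u))) ?_
    (hdom.const_mul _) ?_).2
  · filter_upwards [self_mem_ae_restrict measurableSet_Ioi] with u hu y hy
    refine (norm_cpow_mul_comp_sub_le hf'b s y hu).trans ?_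
    exact mul_le_mul_of_nonneg_right (mul_le_mul_of_nonneg_left (exp_le_exp.2 hy.le) hC)
      (mul_nonneg (rpow_nonneg (le_of_lt hu) _) (exp_pos _).le)
  · filter_upwards with u y _
    exact ((hf (y - u)).comp_sub_const y u).const_mul _

theorem integral_Ioi_cpow_mul_deriv_comp_sub (hf : ∀ t, HasDerivAt f (f' t) t)
    (hf' : Measurable f') (hfb : ∀ t, ‖f t‖ ≤ C * exp t) (hf'b : ∀ t, ‖f' t‖ ≤ C * exp t)
    {s : ℂ} (hs : 0 < s.re) (x : ℝ) :
    ∫ u in Ioi (0 : ℝ), (u : ℂ) ^ s * f' (x - u) =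
      s * ∫ u in Ioi (0 : ℝ), (u : ℂ) ^ (s - 1) * f (x - u) := by
  have hs0 : s ≠ 0 := fun h => by simp [h] at hs
  have hfm : Measurable f :=
    (continuous_iff_continuousAt.2 fun t => (hf t).continuousAt).measurable
  have h_zero : Tendsto (fun u : ℝ => (u : ℂ) ^ s * f (x - u)) (𝓝[>] 0) (𝓝 0) := by
    have hcont : ContinuousAt (fun u : ℝ => (u : ℂ) ^ s * f (x - u)) 0 :=
      (Complex.continuousAt_ofReal_cpow_const 0 s (Or.inl hs)).mul
        ((hf _).continuousAt.comp (continuous_sub_left x).continuousAt)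
    simpa [Complex.zero_cpow hs0] using hcont.tendsto.mono_left nhdsWithin_le_nhds
  have h_infty : Tendsto (fun u : ℝ => (u : ℂ) ^ s * f (x - u)) atTop (𝓝 0) := by
    refine squeeze_zero_norm' ?_ (by
      simpa using (tendsto_rpow_mul_exp_neg_mul_atTop_nhds_zero s.re 1 one_pos).const_mul
        (C * exp x))
    filter_upwards [eventually_gt_atTop 0] with u hu
    exact norm_cpow_mul_comp_sub_le hfb s x hu
  have hint_deriv := integrableOn_cpow_mul_comp_sub hf' hf'b (w := s) (by linarith) x
  have hint := integrableOn_cpow_mul_comp_sub hfm hfb (w := s - 1) (by simpa using hs) x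
  have hibp := integral_Ioi_mul_deriv_eq_deriv_mul
    (u := fun u : ℝ => (u : ℂ) ^ s) (v := fun u => f (x - u))
    (fun u hu => hasDerivAt_ofReal_cpow_const (ne_of_gt hu) hs0)
    (fun u _ => (hf (x - u)).comp_const_sub x u)
    (by simpa [Pi.mul_def] using hint_deriv.neg)
    (by simpa only [IntegrableOn, Pi.mul_def, mul_assoc] using hint.const_mul s)
    h_zero h_infty
  simp only [mul_neg, integral_neg, mul_assoc, integral_const_mul, zero_sub, sub_zero,
    neg_inj] at hibp
  exact hibp

theorem hasDerivAt_integral_Iic_cpow_mul (hf : ∀ t, HasDerivAt f (f' t) t)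
    (hf' : Measurable f') (hfb : ∀ t, ‖f t‖ ≤ C * exp t) (hf'b : ∀ t, ‖f' t‖ ≤ C * exp t)
    {s : ℂ} (hs : 0 < s.re) (x : ℝ) :
    HasDerivAt (fun y : ℝ => ∫ t in Iic y, ((y - t : ℝ) : ℂ) ^ s * f t)
      (s * ∫ t in Iic x, ((x - t : ℝ) : ℂ) ^ (s - 1) * f t) x := by
  simp_rw [setIntegral_Iic_eq_setIntegral_Ioi_sub, sub_sub_cancel]
  rw [← integral_Ioi_cpow_mul_deriv_comp_sub hf hf' hfb hf'b hs]
  exact hasDerivAt_integral_Ioi_cpow_mul_comp_sub hf hf' hfb hf'b (by linarith) x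

end Differentiation

theorem Real.sigmoid_le_exp (t : ℝ) : sigmoid t ≤ exp t :=
  calc sigmoid t = sigmoid (-t) * exp t := by
        simpa using (sigmoid_mul_rexp_neg (-t)).symm
    _ ≤ exp t := mul_le_of_le_one_left (exp_pos t).le (sigmoid_le_one _)

theorem Real.sigmoid_mul_one_sub_sigmoid_le_exp (t : ℝ) : sigmoid t * (1 - sigmoid t) ≤ exp t :=
  (mul_le_of_le_one_right (sigmoid_nonneg t) (by linarith [sigmoid_pos t])).trans
    (sigmoid_le_exp t)

theorem riemannLiouville_logistic_hasDerivAt_general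
    (s : ℂ) (hs : 0 < s.re) (x : ℝ) :
    HasDerivAt
      (fun y : ℝ => (1 / Complex.Gamma (s + 1)) *
        ∫ t in Set.Iic y, ((y - t : ℝ) : ℂ) ^ s / ((Real.exp (-t) + 1 : ℝ) : ℂ))
      ((1 / Complex.Gamma s) *
        ∫ t in Set.Iic x, ((x - t : ℝ) : ℂ) ^ (s - 1) / ((Real.exp (-t) + 1 : ℝ) : ℂ))
      x := by
  have hs0 : s ≠ 0 := fun h => by simp [h] at hs
  have hsigmoid (w : ℂ) (y t : ℝ) : ((y - t : ℝ) : ℂ) ^ w / ((Real.exp (-t) + 1 : ℝ) : ℂ) =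
      ((y - t : ℝ) : ℂ) ^ w * (sigmoid t : ℂ) := by
    rw [sigmoid_def, add_comm, Complex.ofReal_inv, div_eq_mul_inv]
  simp_rw [hsigmoid]
  have hderiv := hasDerivAt_integral_Iic_cpow_mul (C := 1)
    (fun t => (hasDerivAt_sigmoid t).ofReal_comp) (by fun_prop)
    (fun t => by
      rw [Complex.norm_real, norm_of_nonneg (sigmoid_nonneg t), one_mul]
      exact sigmoid_le_exp t)
    (fun t => by
      rw [Complex.norm_real, norm_of_nonneg (mul_nonneg (sigmoid_nonneg t)
        (sub_nonneg.2 (sigmoid_le_one t))), one_mul]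
      exact sigmoid_mul_one_sub_sigmoid_le_exp t) hs x
  refine (hderiv.const_mul (1 / Complex.Gamma (s + 1))).congr_deriv ?_
  rw [Complex.Gamma_add_one s hs0]
  field_simp [Complex.Gamma_ne_zero_of_re_pos hs]

/-- Differentiating the improper Riemann–Liouville fractional integral of order `s + 1`
of the logistic function `f t = 1/(exp (-t) + 1)` gives the one of order `s`:
`(d/dx)(₋∞I_x^{s+1} f)(x) = (₋∞I_x^{s} f)(x)` for `Re s > 0` and `x < 0`. -/
theorem riemannLiouville_logistic_hasDerivAt
    (s : ℂ) (hs : 0 < s.re) (x : ℝ) (hx : x < 0) :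
    HasDerivAt
      (fun y : ℝ => (1 / Complex.Gamma (s + 1)) *
        ∫ t in Set.Iic y, ((y - t : ℝ) : ℂ) ^ s / ((Real.exp (-t) + 1 : ℝ) : ℂ))
      ((1 / Complex.Gamma s) *
        ∫ t in Set.Iic x, ((x - t : ℝ) : ℂ) ^ (s - 1) / ((Real.exp (-t) + 1 : ℝ) : ℂ))
      x :=
  riemannLiouville_logistic_hasDerivAt_general s hs x
end

section
/- For every s ∈ ℂ with Re(s) > 0 and s ≠ 1, the partial sums of the Dirichlet eta series converge to (1−2^{1−s})·ζ(s); that is, lim_{N→∞} ∑_{n=1}^{N} (−1)^{n−1}/n^{s} = (1 − 2^{1−s}) · ζ(s), where ζ denotes the analytically continued Riemann zeta function. Equivalently, ζ(s) = (2^{s}/(2^{s}−2)) · lim_{N→∞} ∑_{n=1}^{N} (−1)^{n−1}/n^{s}. -/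
/-!
Group the eta series in pairs: by the mean value theorem
`|(2k+1)^{-s} - (2k+2)^{-s}| ≤ |s| (2k+1)^{-Re s - 1}`, so the grouped series converges
absolutely and locally uniformly on `Re s > 0` and defines a holomorphic function there. For
`Re s > 1` splitting `ζ(s) = ∑ n^{-s}` into odd and even `n` gives `η(s) = (1 - 2^{1-s}) ζ(s)`,
and the identity theorem on the connected set `{Re s > 0} \ {1}` extends this. Since the terms
of the eta series tend to zero, the ungrouped partial sums have the same limit.
-/

open Filter Topology Complex

theorem tendsto_of_tendsto_comp_two_mul {X : Type*} [TopologicalSpace X] {u : ℕ → X} {x : X}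
    (heven : Tendsto (fun n => u (2 * n)) atTop (𝓝 x))
    (hodd : Tendsto (fun n => u (2 * n + 1)) atTop (𝓝 x)) :
    Tendsto u atTop (𝓝 x) := by
  intro t ht
  obtain ⟨a, ha⟩ := eventually_atTop.1 (heven ht)
  obtain ⟨b, hb⟩ := eventually_atTop.1 (hodd ht)
  refine eventually_atTop.2 ⟨2 * (a + b), fun n hn => ?_⟩
  obtain ⟨k, rfl | rfl⟩ := Nat.even_or_odd' n
  · exact ha k (by omega)
  · exact hb k (by omega)

theorem sum_range_two_mul {M : Type*} [AddCommMonoid M] (a : ℕ → M) (N : ℕ) :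
    ∑ n ∈ Finset.range (2 * N), a n = ∑ k ∈ Finset.range N, (a (2 * k) + a (2 * k + 1)) := by
  induction N with
  | zero => simp
  | succ N ih => simp [Nat.mul_succ, Finset.sum_range_succ, ih, add_assoc]

theorem tendsto_sum_range_of_hasSum_pairs {E : Type*} [AddCommGroup E] [TopologicalSpace E]
    [IsTopologicalAddGroup E] {a : ℕ → E} {L : E}
    (hpairs : HasSum (fun k => a (2 * k) + a (2 * k + 1)) L)
    (ha : Tendsto a atTop (𝓝 0)) :
    Tendsto (fun N => ∑ n ∈ Finset.range N, a n) atTop (𝓝 L) := by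
  have heven : Tendsto (fun N => ∑ n ∈ Finset.range (2 * N), a n) atTop (𝓝 L) := by
    simpa only [sum_range_two_mul] using hpairs.tendsto_sum_nat
  refine tendsto_of_tendsto_comp_two_mul heven ?_
  have hdouble : Tendsto (fun N : ℕ => 2 * N) atTop atTop := tendsto_id.const_mul_atTop' two_pos
  simpa only [Finset.sum_range_succ, Function.comp_def, add_zero] using
    heven.add (ha.comp hdouble)

theorem summable_nat_add_one_rpow {p : ℝ} (hp : p < -1) :
    Summable (fun k : ℕ => ((k : ℝ) + 1) ^ p) := by
  simpa using (summable_nat_add_iff 1).2 (Real.summable_nat_rpow.2 hp)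

theorem norm_ofReal_cpow_neg_sub_le {s : ℂ} (hs : -1 ≤ s.re) {a b : ℝ} (ha : 0 < a)
    (hab : a ≤ b) :
    ‖(a : ℂ) ^ (-s) - (b : ℂ) ^ (-s)‖ ≤ ‖s‖ * a ^ (-s.re - 1) * (b - a) := by
  rw [norm_sub_rev]
  refine norm_image_sub_le_of_norm_deriv_le_segment' (f := fun x : ℝ => (x : ℂ) ^ (-s))
    (f' := fun x : ℝ => -s * (x : ℂ) ^ (-s - 1)) (fun x hx => ?_) (fun x hx => ?_) b
    (Set.right_mem_Icc.2 hab)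
  · have hx0 : 0 < x := ha.trans_le hx.1
    exact (hasStrictDerivAt_cpow_const (ofReal_mem_slitPlane.2 hx0)).hasDerivAt.comp_ofReal
      |>.hasDerivWithinAt
  · have hx0 : 0 < x := ha.trans_le hx.1
    rw [norm_mul, norm_neg, norm_cpow_eq_rpow_re_of_pos hx0, sub_re, neg_re, one_re]
    exact mul_le_mul_of_nonneg_left (Real.rpow_le_rpow_of_nonpos ha hx.1 (by linarith))
      (norm_nonneg s)

noncomputable def etaPair (k : ℕ) (s : ℂ) : ℂ :=
  (2 * k + 1 : ℂ) ^ (-s) - (2 * k + 2 : ℂ) ^ (-s)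

/-- The Dirichlet eta function on `0 < re s`, as the series of its terms grouped in pairs
(which, unlike the eta series itself, converges absolutely there). -/
noncomputable def dirichletEta (s : ℂ) : ℂ := ∑' k, etaPair k s

theorem norm_etaPair_le {s : ℂ} {σ R : ℝ} (hσ : 0 ≤ σ) (hσs : σ ≤ s.re) (hR : ‖s‖ ≤ R)
    (k : ℕ) : ‖etaPair k s‖ ≤ R * ((k : ℝ) + 1) ^ (-σ - 1) := by
  have hmvt := norm_ofReal_cpow_neg_sub_le (s := s) (by linarith)
    (a := 2 * k + 1) (b := 2 * k + 2) (by positivity) (by linarith)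
  rw [show (2 * (k : ℝ) + 2) - (2 * k + 1) = 1 by ring, mul_one] at hmvt
  push_cast at hmvt
  calc ‖etaPair k s‖ ≤ ‖s‖ * (2 * (k : ℝ) + 1) ^ (-s.re - 1) := hmvt
    _ ≤ R * ((k : ℝ) + 1) ^ (-σ - 1) := by
        refine mul_le_mul hR ?_ (by positivity) ((norm_nonneg s).trans hR)
        calc (2 * (k : ℝ) + 1) ^ (-s.re - 1) ≤ (2 * (k : ℝ) + 1) ^ (-σ - 1) :=
              Real.rpow_le_rpow_of_exponent_le (by linarith [k.cast_nonneg (α := ℝ)])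
                (by linarith)
          _ ≤ ((k : ℝ) + 1) ^ (-σ - 1) :=
              Real.rpow_le_rpow_of_nonpos (by positivity) (by linarith) (by linarith)

theorem summable_etaPair {s : ℂ} (hs : 0 < s.re) : Summable (etaPair · s) :=
  .of_norm_bounded ((summable_nat_add_one_rpow (by linarith)).mul_left ‖s‖)
    (norm_etaPair_le hs.le le_rfl le_rfl)

theorem differentiableAt_dirichletEta {s : ℂ} (hs : 0 < s.re) :
    DifferentiableAt ℂ dirichletEta s := by
  set V : Set ℂ := {w | s.re / 2 < w.re ∧ ‖w‖ < ‖s‖ + 1}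
  have hV : IsOpen V :=
    (isOpen_lt continuous_const continuous_re).inter (isOpen_lt continuous_norm continuous_const)
  have hsV : s ∈ V := ⟨by linarith, by linarith⟩
  have hdiff : DifferentiableOn ℂ dirichletEta V := by
    refine differentiableOn_tsum_of_summable_norm
      ((summable_nat_add_one_rpow (p := -(s.re / 2) - 1) (by linarith)).mul_left (‖s‖ + 1))
      (fun k w _ => ?_) hV (fun k w hw => norm_etaPair_le (by positivity) hw.1.le hw.2.le k)
    have hneg : DifferentiableAt ℂ (fun w : ℂ => -w) w := differentiableAt_id.neg
    refine ((hneg.const_cpow (.inl ?_)).sub (hneg.const_cpow (.inl ?_))).differentiableWithinAt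
    · exact_mod_cast (by positivity : (0 : ℝ) < 2 * k + 1).ne'
    · exact_mod_cast (by positivity : (0 : ℝ) < 2 * k + 2).ne'
  exact hdiff.differentiableAt (hV.mem_nhds hsV)

theorem dirichletEta_eq_of_one_lt_re {s : ℂ} (hs : 1 < s.re) :
    dirichletEta s = (1 - 2 ^ (1 - s)) * riemannZeta s := by
  set f : ℕ → ℂ := fun n => ((n : ℂ) + 1) ^ (-s)
  have hf : Summable f := by
    simpa [f, ← cpow_neg, one_div] using
      (summable_nat_add_iff 1).2 (Complex.summable_one_div_nat_cpow.2 hs)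
  have hzeta : riemannZeta s = ∑' n, f n := by
    simp [zeta_eq_tsum_one_div_nat_add_one_cpow hs, f, cpow_neg]
  have hodd : (fun k => f (2 * k + 1)) = fun k => 2 ^ (-s) * f k := by
    ext k
    have : (2 * k + 1 : ℕ) + (1 : ℂ) = (2 : ℕ) * ((k + 1 : ℕ) : ℂ) := by push_cast; ring
    simp only [f]
    rw [this, natCast_mul_natCast_cpow]
    push_cast
    rfl
  have hsum_even : Summable fun k => f (2 * k) :=
    hf.comp_injective (mul_right_injective₀ two_ne_zero)
  have hsum_odd : Summable fun k => f (2 * k + 1) :=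
    hf.comp_injective fun m n h => by simpa using h
  have hsplit := tsum_even_add_odd hsum_even hsum_odd
  have hpair : ∀ k, etaPair k s = f (2 * k) - f (2 * k + 1) := fun k => by
    simp only [etaPair, f]
    push_cast
    ring_nf
  have htwo : (2 : ℂ) ^ (1 - s) = 2 * 2 ^ (-s) := by
    rw [cpow_sub _ _ two_ne_zero, cpow_one, cpow_neg, div_eq_mul_inv]
  rw [dirichletEta, funext hpair, hsum_even.tsum_sub hsum_odd]
  rw [hodd, tsum_mul_left, ← hzeta] at hsplit ⊢
  rw [htwo]
  linear_combination hsplit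

theorem isPreconnected_re_pos_diff_singleton {a : ℂ} (ha : 0 < a.re) :
    IsPreconnected ({z : ℂ | 0 < z.re} \ {a}) := by
  -- `x + iy ↦ eˣ + iy` maps `ℂ` homeomorphically onto the half-plane, so it suffices to remove
  -- one point from `ℂ`.
  let φ : ℂ → ℂ := fun z => ⟨Real.exp z.re, z.im⟩
  have hφ_cont : Continuous φ :=
    equivRealProdCLM.symm.continuous.comp
      (by fun_prop : Continuous fun z : ℂ => (Real.exp z.re, z.im))
  have hφ_inj : Function.Injective φ := fun z w h => by
    simp only [φ, Complex.mk.injEq, Real.exp_eq_exp] at h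
    exact Complex.ext h.1 h.2
  have hφ_range : Set.range φ = {z : ℂ | 0 < z.re} := by
    ext w
    refine ⟨fun ⟨z, hz⟩ => hz ▸ Real.exp_pos z.re, fun hw => ⟨⟨Real.log w.re, w.im⟩, ?_⟩⟩
    exact Complex.ext (Real.exp_log hw) rfl
  have hφa : φ ⟨Real.log a.re, a.im⟩ = a := Complex.ext (Real.exp_log ha) rfl
  have himage : φ '' {⟨Real.log a.re, a.im⟩}ᶜ = {z : ℂ | 0 < z.re} \ {a} := by
    rw [Set.image_compl_eq_range_sdiff_image hφ_inj, hφ_range, Set.image_singleton, hφa]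
  rw [← himage]
  exact ((isConnected_compl_singleton_of_one_lt_rank (rank_real_complex ▸ Nat.one_lt_ofNat) _)
    |>.isPreconnected).image φ hφ_cont.continuousOn

theorem dirichletEta_eq {s : ℂ} (hs : 0 < s.re) (hs1 : s ≠ 1) :
    dirichletEta s = (1 - 2 ^ (1 - s)) * riemannZeta s := by
  set U : Set ℂ := {z : ℂ | 0 < z.re} \ {1}
  have hU : IsOpen U := (isOpen_lt continuous_const continuous_re).sdiff isClosed_singleton
  have hη : AnalyticOnNhd ℂ dirichletEta U := DifferentiableOn.analyticOnNhd
    (fun z hz => (differentiableAt_dirichletEta hz.1).differentiableWithinAt) hU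
  have hζ : AnalyticOnNhd ℂ (fun z => (1 - 2 ^ (1 - z)) * riemannZeta z) U := by
    refine DifferentiableOn.analyticOnNhd
      (fun z hz => DifferentiableAt.differentiableWithinAt ?_) hU
    have hpow : DifferentiableAt ℂ (fun z : ℂ => (2 : ℂ) ^ (1 - z)) z :=
      (differentiableAt_id.const_sub 1).const_cpow (.inl two_ne_zero)
    exact ((differentiableAt_const 1).sub hpow).mul (differentiableAt_riemannZeta hz.2)
  have hnear_two : dirichletEta =ᶠ[𝓝 2] fun z => (1 - 2 ^ (1 - z)) * riemannZeta z := by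
    filter_upwards [(isOpen_lt continuous_const continuous_re).mem_nhds
      (by norm_num : (1 : ℝ) < (2 : ℂ).re)] with z hz using dirichletEta_eq_of_one_lt_re hz
  exact hη.eqOn_of_preconnected_of_eventuallyEq hζ
    (isPreconnected_re_pos_diff_singleton one_pos) ⟨by norm_num, by norm_num⟩ hnear_two
    ⟨hs, hs1⟩

theorem tendsto_neg_one_pow_div_cpow {s : ℂ} (hs : 0 < s.re) :
    Tendsto (fun n : ℕ => (-1 : ℂ) ^ n / ((n : ℂ) + 1) ^ s) atTop (𝓝 0) := by
  rw [tendsto_zero_iff_norm_tendsto_zero]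
  have hnorm (n : ℕ) :
      ‖(-1 : ℂ) ^ n / ((n : ℂ) + 1) ^ s‖ = (((n + 1 : ℕ) : ℝ) ^ s.re)⁻¹ := by
    rw [norm_div, norm_pow, norm_neg, norm_one, one_pow, one_div,
      ← norm_natCast_cpow_of_pos n.succ_pos]
    push_cast
    rfl
  simp_rw [hnorm]
  exact (tendsto_rpow_atTop hs).comp (tendsto_natCast_atTop_atTop.comp (tendsto_add_atTop_nat 1))
    |>.inv_tendsto_atTop

theorem neg_one_pow_div_cpow_add_next_eq_etaPair (s : ℂ) (k : ℕ) :
    (-1 : ℂ) ^ (2 * k) / (((2 * k : ℕ) : ℂ) + 1) ^ s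
      + (-1 : ℂ) ^ (2 * k + 1) / (((2 * k + 1 : ℕ) : ℂ) + 1) ^ s = etaPair k s := by
  simp only [etaPair, pow_succ, pow_mul, cpow_neg]
  push_cast
  ring_nf

/-- Landau's relation: for `Re s > 0`, `s ≠ 1`, the partial sums of the Dirichlet eta
series converge to `(1 - 2^{1-s}) ζ(s)`. -/
theorem eta_partial_sums_tendsto
    (s : ℂ) (hs : 0 < s.re) (hs1 : s ≠ 1) :
    Tendsto
      (fun N : ℕ => ∑ n ∈ Finset.range N, (-1 : ℂ) ^ n / ((n : ℂ) + 1) ^ s)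
      atTop
      (nhds ((1 - (2 : ℂ) ^ (1 - s)) * riemannZeta s)) := by
  refine tendsto_sum_range_of_hasSum_pairs ?_ (tendsto_neg_one_pow_div_cpow hs)
  simp only [neg_one_pow_div_cpow_add_next_eq_etaPair]
  rw [← dirichletEta_eq hs hs1]
  exact (summable_etaPair hs).hasSum
end
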